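/- arXiv:1811.00789 — 3 statements merged into one kernel-verified Lean document; each statement's English description precedes it below -/
import Mathlib

section
/- Let μ > 0 and let u₀ ∈ X₁ ∩ C²(ℝ³) be a nontrivial radially symmetric classical solution of −Δu₀ − μu₀ = u₀³ on ℝ³. Then there exist constants c₀ ≠ 0 and σ₀ ∈ [0, π) such that u₀(x) = c₀ · sin(|x|√μ + σ₀)/|x| + O(1/|x|²) as |x| → ∞. -/
noncomputable section

open Real MeasureTheory Filter Topology

/-- Euclidean space ℝ³. -/
abbrev E3 := EuclideanSpace ℝ (Fin 3)

/-- A fixed unit vector, used to pass from a radial function to its profile. -/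
noncomputable def e₀ : E3 := EuclideanSpace.single 0 1

/-- Radial symmetry of a function on ℝ³. -/
def Radial (w : E3 → ℝ) : Prop := ∀ x y : E3, ‖x‖ = ‖y‖ → w x = w y

/-- The Laplace operator on ℝ³. -/
noncomputable def lap (u : E3 → ℝ) (x : E3) : ℝ :=
  ∑ i : Fin 3, fderiv ℝ (fun y => fderiv ℝ u y (EuclideanSpace.single i 1)) x
    (EuclideanSpace.single i 1)

/-- Membership in the space `X_q` of radial continuous functions with
`sup (1+|x|²)^{q/2} |w(x)| < ∞`. -/
def MemX (q : ℝ) (w : E3 → ℝ) : Prop :=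
  Continuous w ∧ Radial w ∧ ∃ C : ℝ, ∀ x : E3, (1 + ‖x‖ ^ 2) ^ (q / 2) * |w x| ≤ C

/-- `g(x) = O(1/|x|²)` as `|x| → ∞`. -/
def AsympO2 (g : E3 → ℝ) : Prop := ∃ C R : ℝ, ∀ x : E3, R ≤ ‖x‖ → |g x| ≤ C / ‖x‖ ^ 2

open Set

lemma line_hasDerivAt {u : E3 → ℝ} (hu : Differentiable ℝ u) (x v : E3) (t : ℝ) :
    HasDerivAt (fun s : ℝ => u (x + s • v)) (fderiv ℝ u (x + t • v) v) t := by
  have hc : HasDerivAt (fun s : ℝ => x + s • v) v t := by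
    simpa using ((hasDerivAt_id t).smul_const v).const_add x
  exact ((hu (x + t • v)).hasFDerivAt).comp_hasDerivAt t hc

lemma secondDeriv_line {u : E3 → ℝ} (hu : ContDiff ℝ 2 u) (x v : E3) :
    fderiv ℝ (fun y => fderiv ℝ u y v) x v
      = deriv (fun t : ℝ => deriv (fun s : ℝ => u (x + s • v)) t) 0 := by
  have hu1 : Differentiable ℝ u := hu.differentiable two_ne_zero
  have hD : Differentiable ℝ (fun y => fderiv ℝ u y v) := by
    have h1 : ContDiff ℝ 1 (fderiv ℝ u) := hu.fderiv_right (le_refl _)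
    exact ((ContinuousLinearMap.apply ℝ ℝ v).contDiff.comp h1).differentiable one_ne_zero
  have h2 : (fun t : ℝ => deriv (fun s : ℝ => u (x + s • v)) t)
      = fun t : ℝ => (fun y => fderiv ℝ u y v) (x + t • v) := by
    funext t
    exact (line_hasDerivAt hu1 x v t).deriv
  rw [h2]
  have hc : HasDerivAt (fun s : ℝ => x + s • v) v (0:ℝ) := by
    simpa using ((hasDerivAt_id (0:ℝ)).smul_const v).const_add x
  have := ((hD (x + (0:ℝ) • v)).hasFDerivAt).comp_hasDerivAt (0:ℝ) hc
  simp only [zero_smul, add_zero] at this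
  rw [show (fun t : ℝ => (fun y => fderiv ℝ u y v) (x + t • v)) = ((fun y => fderiv ℝ u y v) ∘ fun s : ℝ => x + s • v) from rfl, this.deriv]
lemma deriv_contDiff_of_two {f : ℝ → ℝ} (hf : ContDiff ℝ 2 f) : ContDiff ℝ 1 (deriv f) := by
  have h2 : ContDiff ℝ (1 + 1 : ℕ∞) f := by exact_mod_cast hf
  exact (contDiff_succ_iff_deriv.mp h2).2.2


lemma secondDeriv_shift (f : ℝ → ℝ) (r : ℝ) :
    deriv (deriv (fun s : ℝ => f (r + s))) 0 = deriv (deriv f) r := by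
  have h1 : deriv (fun s : ℝ => f (r + s)) = fun s => deriv f (r + s) := by
    funext s; exact deriv_comp_const_add f r s
  rw [h1, deriv_comp_const_add, add_zero]

lemma secondDeriv_sqrt_comp {f : ℝ → ℝ} (hf : ContDiff ℝ 2 f) {r : ℝ} (hr : 0 < r) :
    deriv (deriv (fun s : ℝ => f (Real.sqrt (r^2 + s^2)))) 0 = deriv f r / r := by
  set S : ℝ → ℝ := fun s => Real.sqrt (r^2 + s^2) with hSdef
  have hSpos : ∀ s : ℝ, 0 < S s := by
    intro s
    exact Real.sqrt_pos.2 (by positivity)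
  have hS0 : S 0 = r := by
    simp [hSdef, Real.sqrt_sq hr.le]
  have hS : ∀ s : ℝ, HasDerivAt S (s / S s) s := by
    intro s
    have hin : HasDerivAt (fun s : ℝ => r^2 + s^2) (2*s) s := by
      simpa using ((hasDerivAt_pow 2 s).const_add (r^2))
    have := (Real.hasDerivAt_sqrt (x := r^2 + s^2) (by positivity)).comp s hin
    refine this.congr_deriv ?_
    rw [hSdef]
    field_simp
  have hfdiff : Differentiable ℝ f := hf.differentiable two_ne_zero
  have hf1 : Differentiable ℝ (deriv f) := (deriv_contDiff_of_two hf).differentiable one_ne_zero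
  have hstep1 : deriv (fun s : ℝ => f (S s)) = fun s => deriv f (S s) * (s / S s) := by
    funext s
    exact (((hfdiff (S s)).hasDerivAt).comp s (hS s)).deriv
  rw [hstep1]
  have hA : HasDerivAt (fun s : ℝ => deriv f (S s)) (deriv (deriv f) (S 0) * (0 / S 0)) 0 :=
    ((hf1 (S 0)).hasDerivAt).comp 0 (hS 0)
  have hB : HasDerivAt (fun s : ℝ => s / S s) ((1 * S 0 - 0 * (0 / S 0)) / (S 0)^2) 0 :=
    (hasDerivAt_id 0).div (hS 0) (hSpos 0).ne'
  have hG := hA.mul hB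
  rw [HasDerivAt.deriv (f := fun s => deriv f (S s) * (s / S s)) hG]
  rw [hS0]
  field_simp
  ring
lemma norm_e₀ : ‖e₀‖ = 1 := by
  rw [e₀, EuclideanSpace.norm_single]; norm_num

lemma radial_rep {u : E3 → ℝ} (hrad : Radial u) (y : E3) : u y = u (‖y‖ • e₀) := by
  apply hrad
  rw [norm_smul, norm_e₀, mul_one, Real.norm_eq_abs, abs_norm]

lemma profile_contDiff {u : E3 → ℝ} (hu : ContDiff ℝ 2 u) :
    ContDiff ℝ 2 (fun t : ℝ => u (t • e₀)) :=
  hu.comp (contDiff_id.smul contDiff_const)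

lemma lap_radial {u : E3 → ℝ} (hu : ContDiff ℝ 2 u) (hrad : Radial u) {r : ℝ} (hr : 0 < r) :
    lap u (r • e₀) = deriv (deriv (fun t : ℝ => u (t • e₀))) r
      + 2 * (deriv (fun t : ℝ => u (t • e₀)) r / r) := by
  set f : ℝ → ℝ := fun t : ℝ => u (t • e₀) with hfdef
  have hfC2 : ContDiff ℝ 2 f := profile_contDiff hu
  have key : ∀ i : Fin 3, i ≠ 0 →
      fderiv ℝ (fun y => fderiv ℝ u y (EuclideanSpace.single i 1)) (r • e₀)
        (EuclideanSpace.single i 1) = deriv f r / r := by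
    intro i hi
    rw [secondDeriv_line hu]
    have hfun : (fun s : ℝ => u (r • e₀ + s • EuclideanSpace.single i 1))
        = fun s => f (Real.sqrt (r^2 + s^2)) := by
      funext s
      have hnorm : ‖r • e₀ + s • (EuclideanSpace.single i 1 : E3)‖ = Real.sqrt (r^2 + s^2) := by
        have hsq : ‖r • e₀ + s • (EuclideanSpace.single i 1 : E3)‖^2 = r^2 + s^2 := by
          rw [norm_add_sq_real]
          have hinner : inner ℝ (r • e₀) (s • (EuclideanSpace.single i 1 : E3)) = (0:ℝ) := by
            rw [real_inner_smul_left, real_inner_smul_right, e₀,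
              EuclideanSpace.inner_single_left]
            simp [EuclideanSpace.single_apply, Ne.symm hi]
          rw [hinner, norm_smul, norm_smul, norm_e₀, EuclideanSpace.norm_single]
          simp [sq_abs]
        rw [← Real.sqrt_sq (norm_nonneg _), hsq]
      rw [radial_rep hrad (r • e₀ + s • EuclideanSpace.single i 1), hnorm]
    rw [hfun, secondDeriv_sqrt_comp hfC2 hr]
  have key0 : fderiv ℝ (fun y => fderiv ℝ u y (EuclideanSpace.single 0 1)) (r • e₀)
      (EuclideanSpace.single 0 1) = deriv (deriv f) r := by
    rw [secondDeriv_line hu]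
    have hfun : (fun s : ℝ => u (r • e₀ + s • EuclideanSpace.single 0 1))
        = fun s => f (r + s) := by
      funext s
      have : r • e₀ + s • (EuclideanSpace.single 0 1 : E3) = (r + s) • e₀ := by
        rw [e₀, add_smul]
      rw [this]
    rw [hfun, secondDeriv_shift]
  rw [lap, Fin.sum_univ_three, key0, key 1 (by decide), key 2 (by decide)]
  ring
lemma rpow_neg_two_eq {r : ℝ} (hr : 0 < r) : r ^ (-2 : ℝ) = 1 / r ^ 2 := by
  rw [Real.rpow_neg hr.le]
  norm_num

lemma integral_Ioi_two {r : ℝ} (hr : 0 < r) : ∫ s in Ioi r, s ^ (-2:ℝ) = 1 / r := by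
  rw [integral_Ioi_rpow_of_lt (by norm_num) hr]
  norm_num
  rw [Real.rpow_neg_one]

lemma tail_bound {F G : ℝ → ℝ} {M : ℝ} (hM : 0 ≤ M)
    (hd : ∀ r : ℝ, 0 < r → HasDerivAt F (G r) r)
    (hGc : ContinuousOn G (Set.Ioi 0))
    (hGb : ∀ r : ℝ, 1 ≤ r → |G r| ≤ M / r ^ 2) :
    ∃ L : ℝ, Tendsto F atTop (𝓝 L) ∧ ∀ r : ℝ, 1 ≤ r → |L - F r| ≤ M / r := by
  have hdom : IntegrableOn (fun s : ℝ => M * s ^ (-2:ℝ)) (Ioi 1) volume :=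
    (integrableOn_Ioi_rpow_of_lt (by norm_num) one_pos).const_mul M
  have hmeas : ∀ r : ℝ, 0 < r → AEStronglyMeasurable G (volume.restrict (Ioi r)) := by
    intro r hr
    exact (hGc.mono (fun x hx => lt_trans hr hx)).aestronglyMeasurable measurableSet_Ioi
  have hbd_ae : ∀ r : ℝ, 1 ≤ r →
      ∀ᵐ s ∂(volume.restrict (Ioi r)), ‖G s‖ ≤ M * s ^ (-2:ℝ) := by
    intro r hr
    refine (ae_restrict_iff' measurableSet_Ioi).2 (Eventually.of_forall fun s hs => ?_)
    have hs1 : (1:ℝ) ≤ s := le_trans hr (le_of_lt hs)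
    rw [Real.norm_eq_abs, mul_comm, rpow_neg_two_eq (lt_of_lt_of_le one_pos hs1)]
    calc |G s| ≤ M / s ^ 2 := hGb s hs1
    _ = 1 / s ^ 2 * M := by ring
  have hInt : ∀ r : ℝ, 1 ≤ r → IntegrableOn G (Ioi r) volume := by
    intro r hr
    exact Integrable.mono' (hdom.mono_set (fun x hx => lt_of_le_of_lt hr hx))
      (hmeas r (lt_of_lt_of_le one_pos hr)) (hbd_ae r hr)
  -- F tends to a limit
  have hFTC : ∀ r : ℝ, 1 ≤ r → F r = F 1 + ∫ s in (1:ℝ)..r, G s := by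
    intro r hr
    have h1 : ∀ x ∈ Set.uIcc (1:ℝ) r, HasDerivAt F (G x) x := by
      intro x hx
      have : (1:ℝ) ≤ x := by
        rcases Set.mem_uIcc.1 hx with ⟨h, _⟩ | ⟨h, _⟩
        · exact h
        · linarith
      exact hd x (lt_of_lt_of_le one_pos this)
    have h2 : IntervalIntegrable G volume 1 r := by
      apply ContinuousOn.intervalIntegrable
      apply hGc.mono
      intro x hx
      rcases Set.mem_uIcc.1 hx with ⟨h, _⟩ | ⟨h, _⟩ <;> · simp; linarith
    have := intervalIntegral.integral_eq_sub_of_hasDerivAt h1 h2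
    rw [this]; ring
  set L : ℝ := F 1 + ∫ s in Ioi 1, G s with hL
  have hTendInt := intervalIntegral_tendsto_integral_Ioi 1 (hInt 1 le_rfl) tendsto_id
  have hTend : Tendsto F atTop (𝓝 L) := by
    apply Tendsto.congr' _ (tendsto_const_nhds.add hTendInt)
    filter_upwards [eventually_ge_atTop (1:ℝ)] with r hr
    exact (hFTC r hr).symm
  refine ⟨L, hTend, fun r hr => ?_⟩
  have hr0 : (0:ℝ) < r := lt_of_lt_of_le one_pos hr
  have htail : ∫ s in Ioi r, G s = L - F r := by
    refine integral_Ioi_of_hasDerivAt_of_tendsto' (fun x hx => hd x ?_) (hInt r hr) hTend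
    exact lt_of_lt_of_le hr0 hx
  rw [← htail, ← Real.norm_eq_abs]
  calc ‖∫ s in Ioi r, G s‖ ≤ ∫ s in Ioi r, M * s ^ (-2:ℝ) := by
        apply norm_integral_le_of_norm_le (hdom.mono_set (fun x hx => lt_of_le_of_lt hr hx))
        exact hbd_ae r hr
  _ = M * (1 / r) := by
        rw [integral_const_mul, integral_Ioi_two hr0]
  _ = M / r := by ring
lemma phase_exists {p q : ℝ} (hpq : p^2 + q^2 ≠ 0) :
    ∃ c σ : ℝ, c ≠ 0 ∧ σ ∈ Set.Ico 0 π ∧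
      ∀ θ : ℝ, c * Real.sin (θ + σ) = p * Real.sin θ + q * Real.cos θ := by
  by_cases hq : q = 0
  · subst hq
    have hp : p ≠ 0 := by
      intro h; apply hpq; rw [h]; ring
    exact ⟨p, 0, hp, ⟨le_rfl, Real.pi_pos⟩, fun θ => by rw [add_zero]; ring⟩
  · set c' : ℝ := Real.sqrt (p^2 + q^2) with hc'
    have hc'pos : 0 < c' := Real.sqrt_pos.2 (lt_of_le_of_ne (by positivity) (Ne.symm hpq))
    have hc'sq : c' ^ 2 = p ^ 2 + q ^ 2 := Real.sq_sqrt (by positivity)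
    set x : ℝ := if 0 < q then p / c' else -p / c' with hxdef
    have habs : |x| ≤ 1 := by
      have hp_le : |p| ≤ c' := by
        rw [hc', ← Real.sqrt_sq_eq_abs]
        exact Real.sqrt_le_sqrt (by nlinarith)
      have h1 : |p / c'| ≤ 1 := by
        rw [abs_div, abs_of_pos hc'pos, div_le_one hc'pos]; exact hp_le
      rw [hxdef]
      split
      · exact h1
      · rw [neg_div, abs_neg]; exact h1
    have hx1 := abs_le.1 habs
    set σ : ℝ := Real.arccos x with hσdef
    have hcos : Real.cos σ = x := Real.cos_arccos hx1.1 hx1.2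
    have hxsq : x ^ 2 = p ^ 2 / c' ^ 2 := by
      rw [hxdef]; split <;> rw [div_pow] <;> ring_nf
    have hsin : Real.sin σ = |q| / c' := by
      rw [hσdef, Real.sin_arccos, hxsq]
      rw [show 1 - p^2/c'^2 = q^2 / c'^2 by field_simp; linarith [hc'sq]]
      rw [Real.sqrt_div (sq_nonneg q), Real.sqrt_sq_eq_abs, Real.sqrt_sq hc'pos.le]
    have hsinpos : 0 < Real.sin σ := by
      rw [hsin]
      exact div_pos (abs_pos.2 hq) hc'pos
    have hσmem : σ ∈ Set.Ico 0 π := by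
      constructor
      · exact Real.arccos_nonneg x
      · rcases lt_or_eq_of_le (Real.arccos_le_pi x) with h | h
        · exact h
        · exfalso
          rw [hσdef] at hsinpos
          rw [h, Real.sin_pi] at hsinpos
          exact lt_irrefl 0 hsinpos
    set c : ℝ := if 0 < q then c' else -c' with hcdef
    have hcne : c ≠ 0 := by
      rw [hcdef]; split
      · exact hc'pos.ne'
      · exact neg_ne_zero.2 hc'pos.ne'
    have hcsin : c * Real.sin σ = q := by
      rw [hcdef, hsin]
      split_ifs with h
      · rw [abs_of_pos h]; field_simp
      · rw [abs_of_neg (lt_of_le_of_ne (not_lt.1 h) hq)]; field_simp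
    have hccos : c * Real.cos σ = p := by
      rw [hcdef, hcos, hxdef]
      split_ifs with h <;> field_simp
    refine ⟨c, σ, hcne, hσmem, fun θ => ?_⟩
    rw [Real.sin_add]
    calc c * (Real.sin θ * Real.cos σ + Real.cos θ * Real.sin σ)
        = (c * Real.cos σ) * Real.sin θ + (c * Real.sin σ) * Real.cos θ := by ring
    _ = p * Real.sin θ + q * Real.cos θ := by rw [hcsin, hccos]


lemma rho_hasDeriv {μ : ℝ} {w : ℝ → ℝ} (hw : ContDiff ℝ 2 w)
    (hODE : ∀ r : ℝ, 0 < r → deriv (deriv w) r = -(μ * w r) - (w r)^3 / r^2)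
    {r : ℝ} (hr : 0 < r) :
    HasDerivAt (fun t => μ * (w t)^2 + (deriv w t)^2)
      (-2 * deriv w r * (w r)^3 / r^2) r := by
  have hwd : Differentiable ℝ w := hw.differentiable two_ne_zero
  have hw1d : Differentiable ℝ (deriv w) := (deriv_contDiff_of_two hw).differentiable one_ne_zero
  have h1 : HasDerivAt (fun t => μ * (w t)^2)
      (μ * ((2:ℕ) * (w r)^1 * deriv w r)) r := ((hwd r).hasDerivAt.pow 2).const_mul μ
  have h2 : HasDerivAt (fun t => (deriv w t)^2)
      ((2:ℕ) * (deriv w r)^1 * deriv (deriv w) r) r := (hw1d r).hasDerivAt.pow 2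
  have h3 := h1.add h2
  refine h3.congr_deriv ?_
  rw [hODE r hr]
  push_cast
  ring

lemma exp_mul_hasDeriv (L s : ℝ) :
    HasDerivAt (fun t : ℝ => Real.exp (L * t)) (Real.exp (L * s) * L) s := by
  have h := (Real.hasDerivAt_exp (L * s)).comp s ((hasDerivAt_id s).const_mul L)
  exact h.congr_deriv (by simp)

set_option maxHeartbeats 2000000 in
lemma vanish {μ C : ℝ} (hμ : 0 < μ) {w : ℝ → ℝ} (hw : ContDiff ℝ 2 w)
    (hODE : ∀ r : ℝ, 0 < r → deriv (deriv w) r = -(μ * w r) - (w r)^3 / r^2)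
    (hbd : ∀ r : ℝ, 0 ≤ r → |w r| ≤ C)
    {r₁ : ℝ} (hr₁ : 0 < r₁) (h0 : μ * (w r₁)^2 + (deriv w r₁)^2 = 0) :
    ∀ t : ℝ, 0 < t → w t = 0 := by
  intro t ht
  set δ : ℝ := min t r₁ with hδdef
  set R : ℝ := max t r₁ with hRdef
  have hδ : 0 < δ := lt_min ht hr₁
  have hC0 : 0 ≤ C := le_trans (abs_nonneg _) (hbd 0 le_rfl)
  set L : ℝ := (C^2/δ^2) * max 1 μ⁻¹ with hLdef
  have hL0 : 0 ≤ L := by positivity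
  set ρ : ℝ → ℝ := fun t => μ * (w t)^2 + (deriv w t)^2 with hρdef
  have hρnn : ∀ s : ℝ, 0 ≤ ρ s := fun s => by positivity
  have hinv : μ⁻¹ * μ = 1 := inv_mul_cancel₀ hμ.ne'
  have hkey : ∀ s : ℝ, δ ≤ s → |(-2 * deriv w s * (w s)^3 / s^2)| ≤ L * ρ s := by
    intro s hs
    have hs0 : 0 < s := lt_of_lt_of_le hδ hs
    have hws : |w s| ≤ C := hbd s hs0.le
    set a : ℝ := |deriv w s| with hadef
    set b : ℝ := |w s| with hbdef
    have ha0 : 0 ≤ a := abs_nonneg _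
    have hb0 : 0 ≤ b := abs_nonneg _
    have heq : |(-2 * deriv w s * (w s)^3 / s^2)| = (2*a*b) * (b^2/s^2) := by
      rw [abs_div, abs_mul, abs_mul, abs_pow, abs_of_pos (pow_pos hs0 2)]
      rw [hadef, hbdef]
      norm_num
      rw [pow_succ, sq_abs]
      ring
    rw [heq]
    have i1 : 2*a*b ≤ max 1 μ⁻¹ * ρ s := by
      have hb2 : b^2 ≤ max 1 μ⁻¹ * (μ * (w s)^2) := by
        have := mul_le_mul_of_nonneg_right (le_max_right 1 μ⁻¹)
          (mul_nonneg hμ.le (sq_nonneg (w s)))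
        calc b^2 = μ⁻¹ * (μ * (w s)^2) := by rw [hbdef, sq_abs]; field_simp
        _ ≤ max 1 μ⁻¹ * (μ * (w s)^2) := this
      have ha2 : a^2 ≤ max 1 μ⁻¹ * (deriv w s)^2 := by
        have h1 : (1:ℝ) ≤ max 1 μ⁻¹ := le_max_left _ _
        have := mul_le_mul_of_nonneg_right h1 (sq_nonneg (deriv w s))
        calc a^2 = (deriv w s)^2 := by rw [hadef, sq_abs]
        _ ≤ max 1 μ⁻¹ * (deriv w s)^2 := by linarith
      nlinarith [sq_nonneg (a - b)]
    have i2 : b^2/s^2 ≤ C^2/δ^2 := by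
      apply div_le_div₀ (by positivity) _ (by positivity) (by nlinarith)
      nlinarith
    calc (2*a*b) * (b^2/s^2) ≤ (max 1 μ⁻¹ * ρ s) * (C^2/δ^2) := by
          apply mul_le_mul i1 i2 (by positivity)
          have := hρnn s
          positivity
    _ = L * ρ s := by rw [hLdef]; ring
  -- monotone functions
  have hφd : ∀ s : ℝ, 0 < s → δ ≤ s → HasDerivAt (fun u => ρ u * Real.exp (L * u))
      ((-2 * deriv w s * (w s)^3 / s^2) * Real.exp (L * s) + ρ s * (Real.exp (L * s) * L)) s :=
    fun s hs _ => (rho_hasDeriv hw hODE hs).mul (exp_mul_hasDeriv L s)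
  have hψd : ∀ s : ℝ, 0 < s → HasDerivAt (fun u => ρ u * Real.exp (-L * u))
      ((-2 * deriv w s * (w s)^3 / s^2) * Real.exp (-L * s) + ρ s * (Real.exp (-L * s) * -L)) s :=
    fun s hs => (rho_hasDeriv hw hODE hs).mul (exp_mul_hasDeriv (-L) s)
  rcases le_total t r₁ with hcase | hcase
  · -- t ≤ r₁ : use φ increasing on [δ, R]
    have hmono : MonotoneOn (fun u => ρ u * Real.exp (L * u)) (Icc δ R) := by
      apply monotoneOn_of_deriv_nonneg (convex_Icc δ R)
      · intro s hs
        exact ((hφd s (lt_of_lt_of_le hδ hs.1) hs.1).continuousAt).continuousWithinAt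
      · intro s hs
        rw [interior_Icc] at hs
        exact ((hφd s (lt_of_lt_of_le hδ hs.1.le) hs.1.le).differentiableAt).differentiableWithinAt
      · intro s hs
        rw [interior_Icc] at hs
        rw [(hφd s (lt_of_lt_of_le hδ hs.1.le) hs.1.le).deriv]
        have h1 := hkey s hs.1.le
        have h2 : -(L * ρ s) ≤ -2 * deriv w s * (w s)^3 / s^2 := by
          have := abs_le.1 h1
          linarith [this.1]
        have h3 : 0 < Real.exp (L * s) := Real.exp_pos _
        nlinarith [mul_le_mul_of_nonneg_right h2 h3.le, hρnn s]
    have htm : t ∈ Icc δ R := ⟨min_le_left _ _, le_max_left _ _⟩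
    have hrm : r₁ ∈ Icc δ R := ⟨min_le_right _ _, le_max_right _ _⟩
    have hmle := hmono htm hrm hcase
    simp only at hmle
    rw [show ρ r₁ = 0 from h0, zero_mul] at hmle
    have hexp : 0 < Real.exp (L * t) := Real.exp_pos _
    have hρt : ρ t ≤ 0 := by
      by_contra hc
      push_neg at hc
      have := mul_pos hc hexp
      linarith
    have h6 : μ * (w t)^2 + (deriv w t)^2 ≤ 0 := hρt
    have h7 : μ * (w t)^2 ≤ 0 := by linarith [sq_nonneg (deriv w t)]
    have h8 : (w t)^2 ≤ 0 := by
      by_contra hc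
      push_neg at hc
      linarith [mul_pos hμ hc]
    have hw2 : (w t)^2 = 0 := le_antisymm h8 (sq_nonneg _)
    exact pow_eq_zero_iff (two_ne_zero) |>.1 hw2
  · -- r₁ ≤ t : use ψ decreasing on [δ, R]
    have hanti : AntitoneOn (fun u => ρ u * Real.exp (-L * u)) (Icc δ R) := by
      apply antitoneOn_of_deriv_nonpos (convex_Icc δ R)
      · intro s hs
        exact ((hψd s (lt_of_lt_of_le hδ hs.1)).continuousAt).continuousWithinAt
      · intro s hs
        rw [interior_Icc] at hs
        exact ((hψd s (lt_of_lt_of_le hδ hs.1.le)).differentiableAt).differentiableWithinAt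
      · intro s hs
        rw [interior_Icc] at hs
        rw [(hψd s (lt_of_lt_of_le hδ hs.1.le)).deriv]
        have h1 := hkey s hs.1.le
        have h2 : -2 * deriv w s * (w s)^3 / s^2 ≤ L * ρ s := by
          have := abs_le.1 h1
          linarith [this.2]
        have h3 : 0 < Real.exp (-L * s) := Real.exp_pos _
        nlinarith [mul_le_mul_of_nonneg_right h2 h3.le, hρnn s]
    have htm : t ∈ Icc δ R := ⟨min_le_left _ _, le_max_left _ _⟩
    have hrm : r₁ ∈ Icc δ R := ⟨min_le_right _ _, le_max_right _ _⟩
    have hmle := hanti hrm htm hcase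
    simp only at hmle
    rw [show ρ r₁ = 0 from h0, zero_mul] at hmle
    have hexp : 0 < Real.exp (-L * t) := Real.exp_pos _
    have hρt : ρ t ≤ 0 := by
      by_contra hc
      push_neg at hc
      have := mul_pos hc hexp
      linarith
    have h6 : μ * (w t)^2 + (deriv w t)^2 ≤ 0 := hρt
    have h7 : μ * (w t)^2 ≤ 0 := by linarith [sq_nonneg (deriv w t)]
    have h8 : (w t)^2 ≤ 0 := by
      by_contra hc
      push_neg at hc
      linarith [mul_pos hμ hc]
    have hw2 : (w t)^2 = 0 := le_antisymm h8 (sq_nonneg _)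
    exact pow_eq_zero_iff (two_ne_zero) |>.1 hw2
set_option maxHeartbeats 2000000 in
lemma asymp {μ C : ℝ} (hμ : 0 < μ) {w : ℝ → ℝ} (hw : ContDiff ℝ 2 w)
    (hODE : ∀ r : ℝ, 0 < r → deriv (deriv w) r = -(μ * w r) - (w r)^3 / r^2)
    (hbd : ∀ r : ℝ, 0 ≤ r → |w r| ≤ C)
    (hpos : 0 < μ * (w 1)^2 + (deriv w 1)^2) :
    ∃ c₀ σ₀ : ℝ, c₀ ≠ 0 ∧ σ₀ ∈ Set.Ico 0 π ∧
      ∀ r : ℝ, 1 ≤ r → |w r - c₀ * Real.sin (r * Real.sqrt μ + σ₀)| ≤ (2*C^3/Real.sqrt μ) / r := by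
  have hC0 : 0 ≤ C := le_trans (abs_nonneg _) (hbd 0 le_rfl)
  set k := Real.sqrt μ with hkdef
  have hk : 0 < k := Real.sqrt_pos.2 hμ
  have hk2 : k^2 = μ := Real.sq_sqrt hμ.le
  have hwd : Differentiable ℝ w := hw.differentiable two_ne_zero
  have hw1d : Differentiable ℝ (deriv w) := (deriv_contDiff_of_two hw).differentiable one_ne_zero
  have hwc : Continuous w := hw.continuous
  set A : ℝ → ℝ := fun r => deriv w r * Real.sin (r*k) - k * (w r * Real.cos (r*k)) with hAdef
  set B : ℝ → ℝ := fun r => deriv w r * Real.cos (r*k) + k * (w r * Real.sin (r*k)) with hBdef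
  set gA : ℝ → ℝ := fun r => (-(w r)^3/r^2) * Real.sin (r*k) with hgAdef
  set gB : ℝ → ℝ := fun r => (-(w r)^3/r^2) * Real.cos (r*k) with hgBdef
  have hsin : ∀ r : ℝ, HasDerivAt (fun t => Real.sin (t*k)) (Real.cos (r*k) * k) r := by
    intro r
    refine ((Real.hasDerivAt_sin (r*k)).comp r ((hasDerivAt_id r).mul_const k)).congr_deriv ?_; ring
  have hcos : ∀ r : ℝ, HasDerivAt (fun t => Real.cos (t*k)) (-Real.sin (r*k) * k) r := by
    intro r
    refine ((Real.hasDerivAt_cos (r*k)).comp r ((hasDerivAt_id r).mul_const k)).congr_deriv ?_; ring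
  have hA' : ∀ r : ℝ, 0 < r → HasDerivAt A (gA r) r := by
    intro r hr
    have h1 := ((hw1d r).hasDerivAt).mul (hsin r)
    have h2 := (((hwd r).hasDerivAt).mul (hcos r)).const_mul k
    have h3 := h1.sub h2
    refine h3.congr_deriv ?_
    rw [hgAdef]
    simp only
    rw [hODE r hr, ← hk2]
    ring
  have hB' : ∀ r : ℝ, 0 < r → HasDerivAt B (gB r) r := by
    intro r hr
    have h1 := ((hw1d r).hasDerivAt).mul (hcos r)
    have h2 := (((hwd r).hasDerivAt).mul (hsin r)).const_mul k
    have h3 := h1.add h2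
    refine h3.congr_deriv ?_
    rw [hgBdef]
    simp only
    rw [hODE r hr, ← hk2]
    ring
  have habs_sin : ∀ x : ℝ, |Real.sin x| ≤ 1 := fun x =>
    abs_le.2 ⟨Real.neg_one_le_sin x, Real.sin_le_one x⟩
  have habs_cos : ∀ x : ℝ, |Real.cos x| ≤ 1 := fun x =>
    abs_le.2 ⟨Real.neg_one_le_cos x, Real.cos_le_one x⟩
  have hgbound : ∀ (r : ℝ), 1 ≤ r → |(-(w r)^3/r^2)| ≤ C^3/r^2 := by
    intro r hr
    have hr0 : (0:ℝ) < r := lt_of_lt_of_le one_pos hr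
    rw [abs_div, abs_neg, abs_pow, abs_of_pos (pow_pos hr0 2)]
    exact (div_le_div_iff_of_pos_right (pow_pos hr0 2)).2
      (pow_le_pow_left₀ (abs_nonneg _) (hbd r hr0.le) 3)
  have hgAb : ∀ r : ℝ, 1 ≤ r → |gA r| ≤ C^3 / r^2 := by
    intro r hr
    rw [hgAdef]
    simp only
    rw [abs_mul]
    calc |(-(w r)^3/r^2)| * |Real.sin (r*k)| ≤ (C^3/r^2) * 1 := by
          apply mul_le_mul (hgbound r hr) (habs_sin _) (abs_nonneg _)
          positivity
    _ = C^3/r^2 := mul_one _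
  have hgBb : ∀ r : ℝ, 1 ≤ r → |gB r| ≤ C^3 / r^2 := by
    intro r hr
    rw [hgBdef]
    simp only
    rw [abs_mul]
    calc |(-(w r)^3/r^2)| * |Real.cos (r*k)| ≤ (C^3/r^2) * 1 := by
          apply mul_le_mul (hgbound r hr) (habs_cos _) (abs_nonneg _)
          positivity
    _ = C^3/r^2 := mul_one _
  have hquot : ContinuousOn (fun r : ℝ => -(w r)^3/r^2) (Set.Ioi 0) := by
    apply ContinuousOn.div ((hwc.pow 3).neg.continuousOn) ((continuous_pow 2).continuousOn)
    intro x hx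
    exact pow_ne_zero 2 (ne_of_gt hx)
  have hgAc : ContinuousOn gA (Set.Ioi 0) := by
    rw [hgAdef]
    exact hquot.mul ((Real.continuous_sin.comp (continuous_id.mul continuous_const)).continuousOn)
  have hgBc : ContinuousOn gB (Set.Ioi 0) := by
    rw [hgBdef]
    exact hquot.mul ((Real.continuous_cos.comp (continuous_id.mul continuous_const)).continuousOn)
  obtain ⟨Ai, hTA, hTailA⟩ := tail_bound (M := C^3) (by positivity) hA' hgAc hgAb
  obtain ⟨Bi, hTB, hTailB⟩ := tail_bound (M := C^3) (by positivity) hB' hgBc hgBb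
  -- lower bound for ρ on [1, ∞)
  set ρ : ℝ → ℝ := fun t => μ * (w t)^2 + (deriv w t)^2 with hρdef
  have hρnn : ∀ s : ℝ, 0 ≤ ρ s := fun s => by positivity
  set c : ℝ := C^2/k with hcdef
  have hc0 : 0 ≤ c := by positivity
  have hexp' : ∀ r : ℝ, r ≠ 0 → HasDerivAt (fun t : ℝ => Real.exp (-c * t⁻¹))
      (Real.exp (-c * r⁻¹) * (-c * -(r^2)⁻¹)) r := by
    intro r hr
    exact (Real.hasDerivAt_exp _).comp r ((hasDerivAt_inv hr).const_mul (-c))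
  have hkey : ∀ s : ℝ, 1 ≤ s → |(-2 * deriv w s * (w s)^3 / s^2)| ≤ (c/s^2) * ρ s := by
    intro s hs
    have hs0 : (0:ℝ) < s := lt_of_lt_of_le one_pos hs
    have hws : |w s| ≤ C := hbd s hs0.le
    set a : ℝ := |deriv w s| with hadef
    set b : ℝ := |w s| with hbdef
    have ha0 : 0 ≤ a := abs_nonneg _
    have hb0 : 0 ≤ b := abs_nonneg _
    have heq : |(-2 * deriv w s * (w s)^3 / s^2)| = (2*a*b) * (b^2/s^2) := by
      rw [abs_div, abs_mul, abs_mul, abs_pow, abs_of_pos (pow_pos hs0 2)]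
      rw [hadef, hbdef]
      norm_num
      rw [pow_succ, sq_abs]
      ring
    rw [heq]
    have i1 : 2*a*b ≤ ρ s / k := by
      rw [le_div_iff₀ hk]
      show 2*a*b*k ≤ μ * (w s)^2 + (deriv w s)^2
      have hsq : 0 ≤ (a - k*b)^2 := sq_nonneg _
      have hab : a^2 = (deriv w s)^2 := by rw [hadef, sq_abs]
      have hkb : k^2 * b^2 = μ * (w s)^2 := by rw [hbdef, sq_abs, hk2]
      nlinarith [hsq, hab, hkb]
    have hb2 : b^2 ≤ C^2 := by nlinarith
    have i2 : b^2/s^2 ≤ C^2/s^2 := (div_le_div_iff_of_pos_right (pow_pos hs0 2)).2 hb2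
    calc (2*a*b) * (b^2/s^2) ≤ (ρ s / k) * (C^2/s^2) := by
          apply mul_le_mul i1 i2 (by positivity)
          have := hρnn s
          positivity
    _ = (c/s^2) * ρ s := by rw [hcdef]; ring
  have hφ' : ∀ s : ℝ, 1 ≤ s → HasDerivAt (fun u => ρ u * Real.exp (-c * u⁻¹))
      ((-2 * deriv w s * (w s)^3 / s^2) * Real.exp (-c * s⁻¹)
        + ρ s * (Real.exp (-c * s⁻¹) * (-c * -(s^2)⁻¹))) s := by
    intro s hs
    have hs0 : (0:ℝ) < s := lt_of_lt_of_le one_pos hs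
    exact (rho_hasDeriv hw hODE hs0).mul (hexp' s hs0.ne')
  have hmono : MonotoneOn (fun u => ρ u * Real.exp (-c * u⁻¹)) (Ici 1) := by
    apply monotoneOn_of_deriv_nonneg (convex_Ici 1)
    · intro s hs
      exact ((hφ' s hs).continuousAt).continuousWithinAt
    · intro s hs
      rw [interior_Ici] at hs
      exact ((hφ' s hs.le).differentiableAt).differentiableWithinAt
    · intro s hs
      rw [interior_Ici] at hs
      rw [(hφ' s hs.le).deriv]
      have hs0 : (0:ℝ) < s := lt_of_lt_of_le one_pos hs.le
      have h1 := hkey s hs.le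
      have h2 : -((c/s^2) * ρ s) ≤ -2 * deriv w s * (w s)^3 / s^2 := by
        have := abs_le.1 h1
        linarith [this.1]
      have h3 : 0 < Real.exp (-c * s⁻¹) := Real.exp_pos _
      have h4 : Real.exp (-c * s⁻¹) * (-c * -(s^2)⁻¹) = Real.exp (-c * s⁻¹) * (c/s^2) := by
        field_simp
      rw [h4]
      nlinarith [mul_le_mul_of_nonneg_right h2 h3.le, hρnn s]
  have hρlow : ∀ r : ℝ, 1 ≤ r → ρ 1 * Real.exp (-c) ≤ ρ r := by
    intro r hr
    have h1 := hmono (self_mem_Ici) (show r ∈ Ici 1 from hr) hr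
    simp only at h1
    rw [inv_one] at h1
    have h2 : Real.exp (-c * r⁻¹) ≤ 1 := by
      rw [Real.exp_le_one_iff]
      have : 0 ≤ r⁻¹ := by positivity
      nlinarith
    calc ρ 1 * Real.exp (-c) = ρ 1 * Real.exp (-c * 1) := by rw [mul_one]
    _ ≤ ρ r * Real.exp (-c * r⁻¹) := h1
    _ ≤ ρ r * 1 := mul_le_mul_of_nonneg_left h2 (hρnn r)
    _ = ρ r := mul_one _
  -- identity ρ = A² + B²
  have hρAB : ∀ r : ℝ, (A r)^2 + (B r)^2 = ρ r := by
    intro r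
    rw [hAdef, hBdef, hρdef]
    simp only
    have h := Real.sin_sq_add_cos_sq (r*k)
    linear_combination ((deriv w r)^2 + k^2*(w r)^2) * h + (w r)^2 * hk2
  have hTendρ : Tendsto ρ atTop (𝓝 (Ai^2 + Bi^2)) := by
    apply Tendsto.congr hρAB
    exact ((hTA.pow 2).add (hTB.pow 2))
  have hABpos : 0 < Ai^2 + Bi^2 := by
    have h1 : 0 < ρ 1 * Real.exp (-c) := by
      apply mul_pos _ (Real.exp_pos _)
      exact hpos
    have h2 : ρ 1 * Real.exp (-c) ≤ Ai^2 + Bi^2 :=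
      ge_of_tendsto hTendρ (eventually_atTop.2 ⟨1, fun r hr => hρlow r hr⟩)
    linarith
  -- phase construction
  set p : ℝ := Bi/k with hpdef
  set q : ℝ := -Ai/k with hqdef
  have hpq : p^2 + q^2 ≠ 0 := by
    have : p^2 + q^2 = (Ai^2 + Bi^2)/k^2 := by
      rw [hpdef, hqdef]
      field_simp
      ring
    rw [this]
    positivity
  obtain ⟨c₀, σ₀, hc₀, hσ₀, hph⟩ := phase_exists hpq
  refine ⟨c₀, σ₀, hc₀, hσ₀, fun r hr => ?_⟩
  have hr0 : (0:ℝ) < r := lt_of_lt_of_le one_pos hr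
  -- representation of w
  have hwr0 : B r * Real.sin (r*k) - A r * Real.cos (r*k) = k * w r := by
    rw [hAdef, hBdef]
    simp only
    have h := Real.sin_sq_add_cos_sq (r*k)
    linear_combination (k * w r) * h
  have hwr : w r = (B r * Real.sin (r*k) - A r * Real.cos (r*k))/k := by
    rw [hwr0]
    field_simp
  have h1 : c₀ * Real.sin (r*k + σ₀) = p * Real.sin (r*k) + q * Real.cos (r*k) := hph (r*k)
  have h2 : w r - c₀ * Real.sin (r*k + σ₀)
      = ((B r - Bi) * Real.sin (r*k) - (A r - Ai) * Real.cos (r*k))/k := by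
    rw [h1, hwr, hpdef, hqdef]
    field_simp
    ring
  rw [h2, abs_div, abs_of_pos hk]
  have h3 : |(B r - Bi) * Real.sin (r*k) - (A r - Ai) * Real.cos (r*k)|
      ≤ |B r - Bi| + |A r - Ai| := by
    calc |(B r - Bi) * Real.sin (r*k) - (A r - Ai) * Real.cos (r*k)|
        ≤ |(B r - Bi) * Real.sin (r*k)| + |(A r - Ai) * Real.cos (r*k)| := abs_sub _ _
    _ ≤ |B r - Bi| * 1 + |A r - Ai| * 1 := by
        rw [abs_mul, abs_mul]
        exact add_le_add (mul_le_mul_of_nonneg_left (habs_sin _) (abs_nonneg _))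
          (mul_le_mul_of_nonneg_left (habs_cos _) (abs_nonneg _))
    _ = |B r - Bi| + |A r - Ai| := by ring
  have h4 : |B r - Bi| ≤ C^3/r := by
    rw [abs_sub_comm]
    exact hTailB r hr
  have h5 : |A r - Ai| ≤ C^3/r := by
    rw [abs_sub_comm]
    exact hTailA r hr
  calc |(B r - Bi) * Real.sin (r*k) - (A r - Ai) * Real.cos (r*k)| / k
      ≤ (C^3/r + C^3/r) / k := by
        apply (div_le_div_iff_of_pos_right hk).2
        linarith [h3, h4, h5]
  _ = (2*C^3/k) / r := by field_simp; ring

/-- Every nontrivial radial solution `u₀ ∈ X₁ ∩ C²` of the nonlinear Helmholtz equation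
`-Δu₀ - μu₀ = u₀³` on ℝ³ satisfies
`u₀(x) = c₀ sin(|x|√μ + σ₀)/|x| + O(1/|x|²)` for some `c₀ ≠ 0`, `σ₀ ∈ [0, π)`. -/
theorem stmt0 (μ : ℝ) (hμ : 0 < μ) (u₀ : E3 → ℝ)
    (hu₀X : MemX 1 u₀) (hu₀C2 : ContDiff ℝ 2 u₀) (hu₀ne : u₀ ≠ 0)
    (hsol : ∀ x : E3, -lap u₀ x - μ * u₀ x = u₀ x ^ 3) :
    ∃ c₀ σ₀ : ℝ, c₀ ≠ 0 ∧ σ₀ ∈ Set.Ico 0 π ∧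
      AsympO2 (fun x => u₀ x - c₀ * Real.sin (‖x‖ * Real.sqrt μ + σ₀) / ‖x‖) := by
  obtain ⟨hu₀c, hrad, C, hC⟩ := hu₀X
  set f : ℝ → ℝ := fun t => u₀ (t • e₀) with hfdef
  have hfC2 : ContDiff ℝ 2 f := profile_contDiff hu₀C2
  have hrep : ∀ x : E3, u₀ x = f ‖x‖ := fun x => radial_rep hrad x
  have hf_ode : ∀ r : ℝ, 0 < r →
      deriv (deriv f) r + 2 * (deriv f r / r) + μ * f r + (f r)^3 = 0 := by
    intro r hr
    have h1 := hsol (r • e₀)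
    rw [lap_radial hu₀C2 hrad hr] at h1
    have h2 : u₀ (r • e₀) = f r := rfl
    rw [h2] at h1
    linarith
  set w : ℝ → ℝ := fun r => r * f r with hwdef
  have hwC2 : ContDiff ℝ 2 w := contDiff_id.mul hfC2
  have hfd : Differentiable ℝ f := hfC2.differentiable two_ne_zero
  have hf1d : Differentiable ℝ (deriv f) := (deriv_contDiff_of_two hfC2).differentiable one_ne_zero
  have hw1 : deriv w = fun r => f r + r * deriv f r := by
    funext r
    have h := (hasDerivAt_id r).mul ((hfd r).hasDerivAt)
    simpa using HasDerivAt.deriv (f := w) h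
  have hw2 : ∀ r : ℝ, deriv (deriv w) r = 2 * deriv f r + r * deriv (deriv f) r := by
    intro r
    rw [hw1]
    have h := ((hfd r).hasDerivAt).add ((hasDerivAt_id r).mul ((hf1d r).hasDerivAt))
    simp only [id_eq] at h
    rw [HasDerivAt.deriv (f := fun r => f r + r * deriv f r) h]
    ring
  have hw_ode : ∀ r : ℝ, 0 < r → deriv (deriv w) r = -(μ * w r) - (w r)^3 / r^2 := by
    intro r hr
    rw [hw2 r]
    have h := hf_ode r hr
    have hwr : w r = r * f r := rfl
    rw [hwr]
    have hr' : r ≠ 0 := hr.ne'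
    field_simp at h
    field_simp
    linear_combination h
  have hwbd : ∀ r : ℝ, 0 ≤ r → |w r| ≤ C := by
    intro r hr0
    have h := hC (r • e₀)
    rw [norm_smul, norm_e₀, mul_one, Real.norm_eq_abs, abs_of_nonneg hr0] at h
    have h2 : |w r| = r * |f r| := by
      rw [hwdef]
      simp only
      rw [abs_mul, abs_of_nonneg hr0]
    have h3 : r ≤ (1 + r^2) ^ ((1:ℝ)/2) := by
      rw [← Real.sqrt_eq_rpow]
      calc r = Real.sqrt (r^2) := (Real.sqrt_sq hr0).symm
      _ ≤ Real.sqrt (1 + r^2) := Real.sqrt_le_sqrt (by linarith)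
    calc |w r| = r * |f r| := h2
    _ ≤ (1 + r^2) ^ ((1:ℝ)/2) * |f r| := mul_le_mul_of_nonneg_right h3 (abs_nonneg _)
    _ ≤ C := h
  by_cases hzero : μ * (w 1)^2 + (deriv w 1)^2 = 0
  · exfalso
    have hvan : ∀ t : ℝ, 0 < t → w t = 0 := vanish hμ hwC2 hw_ode hwbd one_pos hzero
    have hf0 : ∀ t : ℝ, 0 < t → f t = 0 := by
      intro t ht
      have h := hvan t ht
      rw [hwdef] at h
      simp only at h
      rcases mul_eq_zero.1 h with h' | h'
      · exact absurd h' ht.ne'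
      · exact h'
    have hf00 : f 0 = 0 := by
      have hcont : ContinuousAt f 0 := hfC2.continuous.continuousAt
      have h1 : Tendsto f (𝓝[>] (0:ℝ)) (𝓝 (f 0)) := hcont.continuousWithinAt.tendsto
      have h2 : Tendsto f (𝓝[>] (0:ℝ)) (𝓝 0) := by
        apply Tendsto.congr' _ tendsto_const_nhds
        filter_upwards [self_mem_nhdsWithin] with t ht
        exact (hf0 t ht).symm
      exact tendsto_nhds_unique h1 h2
    apply hu₀ne
    funext x
    show u₀ x = 0
    rw [hrep x]
    rcases eq_or_lt_of_le (norm_nonneg x) with h | h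
    · rw [← h]
      exact hf00
    · exact hf0 _ h
  · have hpos : 0 < μ * (w 1)^2 + (deriv w 1)^2 :=
      lt_of_le_of_ne (by positivity) (Ne.symm hzero)
    obtain ⟨c₀, σ₀, hc₀, hσ₀, hest⟩ := asymp hμ hwC2 hw_ode hwbd hpos
    refine ⟨c₀, σ₀, hc₀, hσ₀, 2*C^3/Real.sqrt μ, 1, fun x hx => ?_⟩
    have hr0 : (0:ℝ) < ‖x‖ := lt_of_lt_of_le one_pos hx
    have h1 := hest ‖x‖ hx
    have h2 : u₀ x = w ‖x‖ / ‖x‖ := by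
      rw [hrep x, hwdef]
      simp only
      field_simp
    simp only
    rw [h2]
    have h3 : w ‖x‖ / ‖x‖ - c₀ * Real.sin (‖x‖ * Real.sqrt μ + σ₀) / ‖x‖
        = (w ‖x‖ - c₀ * Real.sin (‖x‖ * Real.sqrt μ + σ₀)) / ‖x‖ := by ring
    rw [h3, abs_div, abs_of_pos hr0]
    calc |w ‖x‖ - c₀ * Real.sin (‖x‖ * Real.sqrt μ + σ₀)| / ‖x‖
        ≤ ((2*C^3/Real.sqrt μ) / ‖x‖) / ‖x‖ := by
          apply (div_le_div_iff_of_pos_right hr0).2 h1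
    _ = (2*C^3/Real.sqrt μ) / ‖x‖^2 := by
          rw [div_div, sq]
end
end

section
/- Let μ, ν > 0, let u₀ ∈ X₁ ∩ C²(ℝ³) be a nontrivial radially symmetric solution of −Δu₀ − μu₀ = u₀³ on ℝ³ with asymptotic expansion u₀(x) = c₀ sin(|x|√μ + σ₀)/|x| + O(1/|x|²), c₀ ≠ 0, σ₀ ∈ [0, π), and let τ₁ ∈ [0, π) with τ₁ ≠ σ₀. Then any solution (u, v, b) ∈ X₁ × X₁ × ℝ of the system (H) satisfying the asymptotic condition (A_ω) has u ≠ 0. -/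
noncomputable section

open Real MeasureTheory Filter Topology

set_option maxHeartbeats 1600000 in
/-- If `u₀(x) = c₀ sin(|x|√μ + σ₀)/|x| + O(1/|x|²)` with `c₀ ≠ 0` and `τ₁ ≠ σ₀`, then any
solution `(u, v, b)` of the Helmholtz system satisfying the asymptotic condition `(A_ω)`
has `u ≠ 0`. -/
theorem stmt4 (μ ν : ℝ) (hμ : 0 < μ) (hν : 0 < ν)
    (u₀ : E3 → ℝ) (hu₀X : MemX 1 u₀) (hu₀C2 : ContDiff ℝ 2 u₀) (hu₀ne : u₀ ≠ 0)
    (hsol₀ : ∀ x : E3, -lap u₀ x - μ * u₀ x = u₀ x ^ 3)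
    (c₀ σ₀ : ℝ) (hc₀ : c₀ ≠ 0) (hσ₀ : σ₀ ∈ Set.Ico 0 π)
    (hasymp₀ : AsympO2 (fun x => u₀ x - c₀ * Real.sin (‖x‖ * Real.sqrt μ + σ₀) / ‖x‖))
    (τ₁ : ℝ) (hτ₁ : τ₁ ∈ Set.Ico 0 π) (hττ : τ₁ ≠ σ₀)
    (ω : ℝ) (hω : ω ∈ Set.Ico 0 π)
    (u v : E3 → ℝ) (b : ℝ)
    (huX : MemX 1 u) (hvX : MemX 1 v) (huC2 : ContDiff ℝ 2 u) (hvC2 : ContDiff ℝ 2 v)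
    (hsys1 : ∀ x : E3, -lap u x - μ * u x = (u x ^ 2 + b * v x ^ 2) * u x)
    (hsys2 : ∀ x : E3, -lap v x - ν * v x = (v x ^ 2 + b * u x ^ 2) * v x)
    (cu cv : ℝ)
    (hAu : AsympO2 (fun x => u x - u₀ x - cu * Real.sin (‖x‖ * Real.sqrt μ + τ₁) / ‖x‖))
    (hAv : AsympO2 (fun x => v x - cv * Real.sin (‖x‖ * Real.sqrt ν + ω) / ‖x‖)) :
    u ≠ 0 := by
  intro hu
  obtain ⟨C1, R1, h1⟩ := hasymp₀
  obtain ⟨C2, R2, h2⟩ := hAu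
  obtain ⟨s, hs⟩ : ∃ s : ℝ, s = Real.sqrt μ := ⟨_, rfl⟩
  rw [← hs] at h1 h2
  have hspos : 0 < s := hs ▸ Real.sqrt_pos.mpr hμ
  have key : ∀ θ : ℝ, c₀ * Real.sin (θ + σ₀) + cu * Real.sin (θ + τ₁) = 0 := by
    intro θ
    obtain ⟨val, hval⟩ : ∃ val : ℝ,
        val = c₀ * Real.sin (θ + σ₀) + cu * Real.sin (θ + τ₁) := ⟨_, rfl⟩
    rw [← hval]
    have habs : ∀ ε : ℝ, 0 < ε → |val| ≤ ε := by
      intro ε hε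
      obtain ⟨M, hM⟩ : ∃ M : ℝ,
          M = max (max R1 R2) ((|C1| + |C2|) / ε) + 1 := ⟨_, rfl⟩
      have hCnn : (0:ℝ) ≤ (|C1| + |C2|) / ε := by positivity
      have hmax1 : R1 ≤ max (max R1 R2) ((|C1| + |C2|) / ε) :=
        le_trans (le_max_left _ _) (le_max_left _ _)
      have hmax2 : R2 ≤ max (max R1 R2) ((|C1| + |C2|) / ε) :=
        le_trans (le_max_right _ _) (le_max_left _ _)
      have hmax3 : (|C1| + |C2|) / ε ≤ max (max R1 R2) ((|C1| + |C2|) / ε) :=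
        le_max_right _ _
      have hM1 : 1 ≤ M := by linarith
      obtain ⟨n, hn⟩ := exists_nat_ge (s * M + |θ|)
      obtain ⟨r, hr⟩ : ∃ r : ℝ, r = (θ + 2 * π * n) / s := ⟨_, rfl⟩
      have hπ : (3:ℝ) < π := Real.pi_gt_three
      have h2pn : (n:ℝ) ≤ 2 * π * n := by
        nlinarith [Nat.cast_nonneg (α := ℝ) n]
      have hrM : M ≤ r := by
        rw [hr, le_div_iff₀ hspos]
        have hθ : -|θ| ≤ θ := neg_abs_le θ
        nlinarith
      have hrpos : 0 < r := lt_of_lt_of_le (by linarith) hrM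
      obtain ⟨x, hx⟩ : ∃ x : E3, x = r • e₀ := ⟨_, rfl⟩
      have hnorm : ‖x‖ = r := by
        rw [hx, norm_smul, show e₀ = EuclideanSpace.single 0 1 from rfl,
          EuclideanSpace.norm_single]
        simp [abs_of_pos hrpos]
      have hrs : r * s = θ + 2 * π * n := by
        rw [hr]; field_simp
      have hsin1 : Real.sin (r * s + σ₀) = Real.sin (θ + σ₀) := by
        rw [hrs, show θ + 2 * π * n + σ₀ = θ + σ₀ + n * (2 * π) by ring]
        exact Real.sin_add_nat_mul_two_pi _ n
      have hsin2 : Real.sin (r * s + τ₁) = Real.sin (θ + τ₁) := by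
        rw [hrs, show θ + 2 * π * n + τ₁ = θ + τ₁ + n * (2 * π) by ring]
        exact Real.sin_add_nat_mul_two_pi _ n
      have e1 := h1 x (by rw [hnorm]; linarith)
      have e2 := h2 x (by rw [hnorm]; linarith)
      simp only [hnorm, hsin1, hsin2] at e1 e2
      rw [show u x = 0 from congrFun hu x] at e2
      have hsum : |(u₀ x - c₀ * Real.sin (θ + σ₀) / r) +
          (0 - u₀ x - cu * Real.sin (θ + τ₁) / r)| ≤ (|C1| + |C2|) / r ^ 2 := by
        calc |(u₀ x - c₀ * Real.sin (θ + σ₀) / r) +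
            (0 - u₀ x - cu * Real.sin (θ + τ₁) / r)|
            ≤ |u₀ x - c₀ * Real.sin (θ + σ₀) / r| +
              |0 - u₀ x - cu * Real.sin (θ + τ₁) / r| := abs_add_le _ _
          _ ≤ C1 / r ^ 2 + C2 / r ^ 2 := add_le_add e1 e2
          _ ≤ (|C1| + |C2|) / r ^ 2 := by
              have h1' : C1 ≤ |C1| := le_abs_self C1
              have h2' : C2 ≤ |C2| := le_abs_self C2
              have hr2 : (0:ℝ) < r ^ 2 := by positivity
              rw [← add_div, div_le_div_iff₀ hr2 hr2]
              nlinarith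
      have heq : (u₀ x - c₀ * Real.sin (θ + σ₀) / r) +
          (0 - u₀ x - cu * Real.sin (θ + τ₁) / r) = -val / r := by
        rw [hval]; field_simp; ring
      rw [heq, abs_div, abs_neg, abs_of_pos hrpos] at hsum
      have hstep : |val| ≤ (|C1| + |C2|) / r := by
        have hr2 : (0:ℝ) < r ^ 2 := by positivity
        rw [div_le_div_iff₀ hrpos hr2] at hsum
        rw [le_div_iff₀ hrpos]
        nlinarith
      have hrC : (|C1| + |C2|) / ε ≤ r := by linarith
      have hfin : (|C1| + |C2|) / r ≤ ε := by
        rw [div_le_iff₀ hrpos]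
        rw [div_le_iff₀ hε] at hrC
        nlinarith
      linarith
    have h0 : |val| ≤ 0 := by
      by_contra h
      push_neg at h
      have := habs (|val| / 2) (by linarith)
      linarith
    exact abs_eq_zero.mp (le_antisymm h0 (abs_nonneg _))
  have hkey := key (-τ₁)
  rw [show -τ₁ + σ₀ = σ₀ - τ₁ by ring, show -τ₁ + τ₁ = 0 by ring, Real.sin_zero,
    mul_zero, add_zero] at hkey
  obtain ⟨hσ0, hσπ⟩ := hσ₀
  obtain ⟨hτ0, hτπ⟩ := hτ₁
  have hne : Real.sin (σ₀ - τ₁) ≠ 0 := by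
    intro h
    have h' := (Real.sin_eq_zero_iff_of_lt_of_lt (by linarith) (by linarith)).mp h
    exact hττ (by linarith)
  exact hc₀ (by rcases mul_eq_zero.mp hkey with h | h; exact h; exact absurd h hne)
end
end

section
/- For every λ > 0, the asymptotic phase ω_λ : X₂ → ℝ, g ↦ ω_λ(g), is continuous (with respect to the X₂ norm). -/
noncomputable section

open Real MeasureTheory Filter Topology

/-- `φ` is the Prüfer phase function of `g`: it solves
`φ' = 1 + λ⁻¹ g(r) sin²(φ√λ)` on `[0,∞)` with `φ(0) = 0`. -/
def PhaseODE (lam : ℝ) (g φ : ℝ → ℝ) : Prop :=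
  φ 0 = 0 ∧ ∀ r ∈ Set.Ici (0 : ℝ),
    HasDerivWithinAt φ (1 + lam⁻¹ * (g r * Real.sin (φ r * Real.sqrt lam) ^ 2)) (Set.Ici 0) r

/-- `val` is the asymptotic phase `ω_λ(g) = λ^{-1/2} ∫₀^∞ g(r) sin²(φ(r)√λ) dr` of `g`,
where `φ` is the Prüfer phase function of `g`. -/
def IsPhase (lam : ℝ) (g : ℝ → ℝ) (val : ℝ) : Prop :=
  ∃ φ : ℝ → ℝ, PhaseODE lam g φ ∧
    val = (Real.sqrt lam)⁻¹ *
      ∫ r in Set.Ioi (0 : ℝ), g r * Real.sin (φ r * Real.sqrt lam) ^ 2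

/-- The Banach space `X₂` of radial continuous functions `g` on ℝ³ with
`‖g‖_{X₂} = sup (1+|x|²)|g(x)| < ∞`, realized isometrically as the space of bounded
continuous functions on `[0,∞)`: the element `W` represents the radial function
`g(x) = W(‖x‖)/(1+‖x‖²)`. -/
abbrev X2 := BoundedContinuousFunction NNReal ℝ

/-- The radial profile of the `X₂` function represented by `W : X2`. -/
noncomputable def profile2 (W : X2) (r : ℝ) : ℝ := W ‖r‖₊ / (1 + r ^ 2)

/-! ### Auxiliary lemmas -/

lemma one_add_sq_pos (r : ℝ) : (0:ℝ) < 1 + r ^ 2 := by positivity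

lemma profile2_cont (W : X2) : Continuous (profile2 W) := by
  apply Continuous.div (W.continuous.comp continuous_nnnorm) (by continuity)
  intro r; exact (one_add_sq_pos r).ne'

lemma profile2_abs_le (W : X2) (r : ℝ) : |profile2 W r| ≤ ‖W‖ * (1 + r ^ 2)⁻¹ := by
  rw [profile2, abs_div, abs_of_pos (one_add_sq_pos r), div_eq_mul_inv]
  have := W.norm_coe_le_norm ‖r‖₊
  have h2 : (0:ℝ) < (1 + r ^ 2)⁻¹ := by positivity
  exact mul_le_mul_of_nonneg_right (by simpa using this) h2.le

lemma profile2_abs_le' (W : X2) (r : ℝ) : |profile2 W r| ≤ ‖W‖ := by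
  refine (profile2_abs_le W r).trans ?_
  have h1 : (1 + r ^ 2)⁻¹ ≤ 1 := by
    rw [inv_le_one_iff₀]; right; nlinarith [sq_nonneg r]
  calc ‖W‖ * (1 + r ^ 2)⁻¹ ≤ ‖W‖ * 1 :=
        mul_le_mul_of_nonneg_left h1 (norm_nonneg _)
    _ = ‖W‖ := mul_one _

lemma profile2_sub (W V : X2) (r : ℝ) :
    profile2 W r - profile2 V r = profile2 (W - V) r := by
  simp [profile2, sub_div]

lemma abs_sin_sub_sin (a b : ℝ) : |Real.sin a - Real.sin b| ≤ |a - b| := by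
  rw [Real.sin_sub_sin]
  calc |2 * Real.sin ((a - b) / 2) * Real.cos ((a + b) / 2)|
      = 2 * |Real.sin ((a - b) / 2)| * |Real.cos ((a + b) / 2)| := by
        rw [abs_mul, abs_mul]; norm_num
    _ ≤ 2 * |(a - b) / 2| * 1 := by
        have h1 : |Real.sin ((a - b) / 2)| ≤ |(a - b) / 2| := Real.abs_sin_le_abs
        have h2 : |Real.cos ((a + b) / 2)| ≤ 1 := Real.abs_cos_le_one _
        have h3 : (0:ℝ) ≤ |Real.cos ((a + b) / 2)| := abs_nonneg _
        have h4 : (0:ℝ) ≤ |(a - b) / 2| := abs_nonneg _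
        nlinarith [abs_nonneg (Real.sin ((a - b) / 2))]
    _ = |a - b| := by rw [abs_div, abs_two]; ring

lemma abs_sin_sq_sub (a b : ℝ) : |Real.sin a ^ 2 - Real.sin b ^ 2| ≤ 2 * |a - b| := by
  have h1 := abs_sin_sub_sin a b
  have h2 : |Real.sin a + Real.sin b| ≤ 2 := by
    calc |Real.sin a + Real.sin b| ≤ |Real.sin a| + |Real.sin b| := abs_add_le _ _
      _ ≤ 1 + 1 := add_le_add (Real.abs_sin_le_one a) (Real.abs_sin_le_one b)
      _ = 2 := by norm_num
  calc |Real.sin a ^ 2 - Real.sin b ^ 2|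
      = |Real.sin a + Real.sin b| * |Real.sin a - Real.sin b| := by
        rw [← abs_mul]; ring_nf
    _ ≤ 2 * |a - b| := mul_le_mul h2 h1 (abs_nonneg _) (by norm_num)

lemma phase_contOn {lam : ℝ} {g φ : ℝ → ℝ} (h : PhaseODE lam g φ) :
    ContinuousOn φ (Set.Ici 0) := fun r hr => (h.2 r hr).continuousWithinAt

/-- The integrand of the asymptotic phase. -/
def FF (lam : ℝ) (W : X2) (φ : ℝ → ℝ) (r : ℝ) : ℝ :=
  profile2 W r * Real.sin (φ r * Real.sqrt lam) ^ 2

lemma FF_contOn (lam : ℝ) (W : X2) {φ : ℝ → ℝ} (hφ : ContinuousOn φ (Set.Ici 0)) :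
    ContinuousOn (FF lam W φ) (Set.Ici 0) := by
  apply ContinuousOn.mul ((profile2_cont W).continuousOn)
  exact ((Real.continuous_sin.comp_continuousOn (hφ.mul continuousOn_const)).pow 2)

lemma FF_abs_le (lam : ℝ) (W : X2) (φ : ℝ → ℝ) (r : ℝ) :
    |FF lam W φ r| ≤ ‖W‖ * (1 + r ^ 2)⁻¹ := by
  rw [FF, abs_mul]
  calc |profile2 W r| * |Real.sin (φ r * Real.sqrt lam) ^ 2|
      ≤ (‖W‖ * (1 + r ^ 2)⁻¹) * 1 := by
        apply mul_le_mul (profile2_abs_le W r) _ (abs_nonneg _)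
          (by positivity)
        rw [abs_pow]
        exact pow_le_one₀ (abs_nonneg _) (Real.abs_sin_le_one _)
    _ = ‖W‖ * (1 + r ^ 2)⁻¹ := mul_one _

lemma dom_integrable (W : X2) : IntegrableOn (fun r : ℝ => ‖W‖ * (1 + r ^ 2)⁻¹) (Set.Ioi 0) :=
  (integrable_inv_one_add_sq.const_mul ‖W‖).integrableOn

lemma FF_integrableOn (lam : ℝ) (W : X2) {φ : ℝ → ℝ} (hφ : ContinuousOn φ (Set.Ici 0)) :
    IntegrableOn (FF lam W φ) (Set.Ioi 0) := by
  refine Integrable.mono' (dom_integrable W) ?_ ?_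
  · exact ((FF_contOn lam W hφ).mono Set.Ioi_subset_Ici_self).aestronglyMeasurable
      measurableSet_Ioi
  · exact Eventually.of_forall fun r => by
      simpa [Real.norm_eq_abs] using FF_abs_le lam W φ r

lemma FF_tail (lam : ℝ) (W : X2) {φ : ℝ → ℝ} (hφ : ContinuousOn φ (Set.Ici 0))
    {T : ℝ} (hT : 0 < T) :
    |∫ r in Set.Ioi T, FF lam W φ r| ≤ ‖W‖ / T := by
  have hsub : Set.Ioi T ⊆ Set.Ioi (0:ℝ) := Set.Ioi_subset_Ioi hT.le
  have hint : IntegrableOn (FF lam W φ) (Set.Ioi T) :=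
    (FF_integrableOn lam W hφ).mono_set hsub
  have hdom : IntegrableOn (fun r : ℝ => ‖W‖ * r ^ (-2:ℝ)) (Set.Ioi T) :=
    (integrableOn_Ioi_rpow_of_lt (by norm_num) hT).const_mul ‖W‖
  calc |∫ r in Set.Ioi T, FF lam W φ r| ≤ ∫ r in Set.Ioi T, |FF lam W φ r| := by
        simpa [Real.norm_eq_abs] using
          norm_integral_le_integral_norm (μ := volume.restrict (Set.Ioi T)) (FF lam W φ)
    _ ≤ ∫ r in Set.Ioi T, ‖W‖ * r ^ (-2:ℝ) := by
        apply setIntegral_mono_on hint.abs hdom measurableSet_Ioi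
        intro r hr
        have hr0 : 0 < r := hT.trans hr
        refine (FF_abs_le lam W φ r).trans ?_
        have heq : r ^ (-2:ℝ) = (r ^ 2)⁻¹ := by
          rw [Real.rpow_neg hr0.le, ← Real.rpow_natCast r 2]
          norm_num
        rw [heq]
        have hle : (1 + r ^ 2)⁻¹ ≤ (r ^ 2)⁻¹ := by
          apply inv_anti₀ (by positivity)
          nlinarith
        exact mul_le_mul_of_nonneg_left hle (norm_nonneg _)
    _ = ‖W‖ * T ^ (-1:ℝ) := by
        rw [integral_const_mul, integral_Ioi_rpow_of_lt (by norm_num) hT]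
        norm_num
    _ = ‖W‖ / T := by rw [Real.rpow_neg_one]; ring

lemma FF_diff_le (lam : ℝ) (W V : X2) (φ ψ : ℝ → ℝ) (r : ℝ) :
    |FF lam W φ r - FF lam V ψ r|
      ≤ ‖W - V‖ + ‖V‖ * (2 * (Real.sqrt lam * |φ r - ψ r|)) := by
  set s := Real.sqrt lam with hs
  have hs0 : 0 ≤ s := Real.sqrt_nonneg _
  have e1 : |profile2 W r - profile2 V r| ≤ ‖W - V‖ := by
    rw [profile2_sub]; exact profile2_abs_le' _ _
  have e2 : |Real.sin (φ r * s) ^ 2 - Real.sin (ψ r * s) ^ 2| ≤ 2 * (s * |φ r - ψ r|) := by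
    refine (abs_sin_sq_sub _ _).trans ?_
    have h : φ r * s - ψ r * s = (φ r - ψ r) * s := by ring
    rw [h, abs_mul, abs_of_nonneg hs0]
    ring_nf
    exact le_refl _
  have e3 : |profile2 V r| ≤ ‖V‖ := profile2_abs_le' _ _
  have e4 : |Real.sin (φ r * s) ^ 2| ≤ 1 := by
    rw [abs_pow]; exact pow_le_one₀ (abs_nonneg _) (Real.abs_sin_le_one _)
  have h0 : FF lam W φ r - FF lam V ψ r
      = (profile2 W r - profile2 V r) * Real.sin (φ r * s) ^ 2
        + profile2 V r * (Real.sin (φ r * s) ^ 2 - Real.sin (ψ r * s) ^ 2) := by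
    rw [FF, FF, ← hs]; ring
  rw [h0]
  refine (abs_add_le _ _).trans ?_
  rw [abs_mul, abs_mul]
  have b1 : |profile2 W r - profile2 V r| * |Real.sin (φ r * s) ^ 2| ≤ ‖W - V‖ * 1 :=
    mul_le_mul e1 e4 (abs_nonneg _) ((abs_nonneg _).trans e1)
  have b2 : |profile2 V r| * |Real.sin (φ r * s) ^ 2 - Real.sin (ψ r * s) ^ 2|
      ≤ ‖V‖ * (2 * (s * |φ r - ψ r|)) :=
    mul_le_mul e3 e2 (abs_nonneg _) ((abs_nonneg _).trans e3)
  linarith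

lemma gronwallBound_le {K ε x T : ℝ} (hK : 0 ≤ K) (hε : 0 ≤ ε) (hx : 0 ≤ x) (hxT : x ≤ T) :
    gronwallBound 0 K ε x ≤ ε * (T * Real.exp (K * T)) := by
  rcases eq_or_ne K 0 with h0 | h0
  · subst h0
    rw [gronwallBound_K0]
    simp only [zero_add, zero_mul, Real.exp_zero, mul_one]
    exact mul_le_mul_of_nonneg_left hxT hε
  · have hKpos : 0 < K := lt_of_le_of_ne hK (Ne.symm h0)
    rw [gronwallBound_of_K_ne_0 h0]
    simp only [zero_mul, zero_add]
    rw [div_mul_eq_mul_div, div_le_iff₀ hKpos]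
    have h1 : Real.exp (K * x) ≤ Real.exp (K * T) :=
      Real.exp_le_exp.2 (mul_le_mul_of_nonneg_left hxT hK)
    have h2 : -(K * T) + 1 ≤ Real.exp (-(K * T)) := Real.add_one_le_exp _
    have h3 : Real.exp (-(K * T)) * Real.exp (K * T) = 1 := by
      rw [← Real.exp_add]; simp
    have h4 : Real.exp (K * T) - 1 ≤ K * T * Real.exp (K * T) := by
      nlinarith [mul_le_mul_of_nonneg_right h2 (Real.exp_pos (K * T)).le]
    have h5 : ε * (Real.exp (K * x) - 1) ≤ ε * (K * T * Real.exp (K * T)) :=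
      mul_le_mul_of_nonneg_left (by linarith) hε
    calc ε * (Real.exp (K * x) - 1) ≤ ε * (K * T * Real.exp (K * T)) := h5
      _ = ε * (T * Real.exp (K * T)) * K := by ring

lemma phase_diff_le {lam : ℝ} (hlam : 0 < lam) (W V : X2) {φ ψ : ℝ → ℝ}
    (hφ : PhaseODE lam (profile2 W) φ) (hψ : PhaseODE lam (profile2 V) ψ)
    {T : ℝ} (hT : 0 ≤ T) {x : ℝ} (hx : x ∈ Set.Icc (0:ℝ) T) :
    |φ x - ψ x| ≤ (lam⁻¹ * ‖W - V‖) *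
      (T * Real.exp ((lam⁻¹ * (2 * ‖V‖ * Real.sqrt lam)) * T)) := by
  set s := Real.sqrt lam with hs
  have hs0 : 0 ≤ s := Real.sqrt_nonneg _
  set K : ℝ := lam⁻¹ * (2 * ‖V‖ * s) with hK
  have hK0 : 0 ≤ K := by positivity
  set ε : ℝ := lam⁻¹ * ‖W - V‖ with hε
  have hε0 : 0 ≤ ε := by positivity
  set f : ℝ → ℝ := fun r => φ r - ψ r with hf
  set f' : ℝ → ℝ := fun r => lam⁻¹ * (profile2 W r * Real.sin (φ r * s) ^ 2
      - profile2 V r * Real.sin (ψ r * s) ^ 2) with hf'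
  have hderiv : ∀ r ∈ Set.Ici (0:ℝ), HasDerivWithinAt f (f' r) (Set.Ici 0) r := by
    intro r hr
    have h : HasDerivWithinAt f _ (Set.Ici 0) r := (hφ.2 r hr).sub (hψ.2 r hr)
    convert h using 1
    simp only [hf']
    ring
  have main : ∀ y ∈ Set.Icc (0:ℝ) T, ‖f y‖ ≤ gronwallBound 0 K ε (y - 0) := by
    apply norm_le_gronwallBound_of_norm_deriv_right_le
    · intro r hr
      exact ((hderiv r (Set.mem_Ici.2 hr.1)).continuousWithinAt).mono
        Set.Icc_subset_Ici_self
    · intro r hr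
      exact (hderiv r (Set.mem_Ici.2 hr.1)).mono (Set.Ici_subset_Ici.2 hr.1)
    · simp [hf, hφ.1, hψ.1]
    · intro r hr
      have key : |profile2 W r * Real.sin (φ r * s) ^ 2
          - profile2 V r * Real.sin (ψ r * s) ^ 2|
          ≤ ‖W - V‖ + ‖V‖ * (2 * (s * |f r|)) := FF_diff_le lam W V φ ψ r
      have hln : (0:ℝ) < lam⁻¹ := by positivity
      calc ‖f' r‖ = lam⁻¹ * |profile2 W r * Real.sin (φ r * s) ^ 2
            - profile2 V r * Real.sin (ψ r * s) ^ 2| := by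
            rw [hf', Real.norm_eq_abs, abs_mul, abs_of_pos hln]
        _ ≤ lam⁻¹ * (‖W - V‖ + ‖V‖ * (2 * (s * |f r|))) :=
            mul_le_mul_of_nonneg_left key hln.le
        _ = K * ‖f r‖ + ε := by rw [Real.norm_eq_abs]; ring
  have hmx := main x hx
  rw [Real.norm_eq_abs, sub_zero] at hmx
  exact hmx.trans (gronwallBound_le hK0 hε0 hx.1 hx.2)

/-- The asymptotic phase `ω_λ : X₂ → ℝ` is continuous with respect to the `X₂` norm. -/
theorem stmt14 (lam : ℝ) (hlam : 0 < lam) (Phase : X2 → ℝ)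
    (hPhase : ∀ g : X2, IsPhase lam (profile2 g) (Phase g)) :
    Continuous Phase := by
  rw [continuous_iff_continuousAt]
  intro W₀
  rw [Metric.continuousAt_iff]
  intro ε hε
  have hs0 : 0 < Real.sqrt lam := Real.sqrt_pos.2 hlam
  set s : ℝ := Real.sqrt lam with hsdef
  obtain ⟨φ₀, hφ₀, hval₀⟩ := hPhase W₀
  set T : ℝ := max 1 (4 * s⁻¹ * (‖W₀‖ + 1) / ε) with hTdef
  have hT1 : (1:ℝ) ≤ T := le_max_left _ _
  have hT0 : (0:ℝ) < T := lt_of_lt_of_le one_pos hT1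
  set K : ℝ := lam⁻¹ * (2 * ‖W₀‖ * s) with hKdef
  set C : ℝ := T * Real.exp (K * T) with hCdef
  have hC0 : 0 < C := by positivity
  set M : ℝ := 1 + 2 * ‖W₀‖ * s * lam⁻¹ * C with hMdef
  have hM0 : 0 < M := by positivity
  set D : ℝ := s⁻¹ * M * T with hDdef
  have hD0 : 0 < D := by positivity
  refine ⟨min 1 (ε / 2 / (D + 1)), by positivity, ?_⟩
  intro W hW
  rw [dist_eq_norm] at hW
  set δ : ℝ := ‖W - W₀‖ with hδdef
  have hδ0 : 0 ≤ δ := norm_nonneg _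
  have hδ1 : δ < 1 := lt_of_lt_of_le hW (min_le_left _ _)
  have hδ2 : δ < ε / 2 / (D + 1) := lt_of_lt_of_le hW (min_le_right _ _)
  have hWn : ‖W‖ ≤ ‖W₀‖ + 1 := by
    calc ‖W‖ = ‖W₀ + (W - W₀)‖ := by ring_nf
      _ ≤ ‖W₀‖ + ‖W - W₀‖ := norm_add_le _ _
      _ ≤ ‖W₀‖ + 1 := by linarith
  obtain ⟨φ, hφ, hval⟩ := hPhase W
  have hφc : ContinuousOn φ (Set.Ici 0) := phase_contOn hφ
  have hφ₀c : ContinuousOn φ₀ (Set.Ici 0) := phase_contOn hφ₀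
  have hIW : IntegrableOn (FF lam W φ) (Set.Ioi 0) := FF_integrableOn lam W hφc
  have hI₀ : IntegrableOn (FF lam W₀ φ₀) (Set.Ioi 0) := FF_integrableOn lam W₀ hφ₀c
  -- split the integrals at T
  have hsplit : ∀ (V : X2) (ψ : ℝ → ℝ), IntegrableOn (FF lam V ψ) (Set.Ioi 0) →
      ∫ r in Set.Ioi (0:ℝ), FF lam V ψ r
        = (∫ r in Set.Ioc 0 T, FF lam V ψ r) + ∫ r in Set.Ioi T, FF lam V ψ r := by
    intro V ψ hint
    rw [← setIntegral_union (Set.Ioc_disjoint_Ioi le_rfl) measurableSet_Ioi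
      (hint.mono_set Set.Ioc_subset_Ioi_self)
      (hint.mono_set (Set.Ioi_subset_Ioi hT0.le)),
      Set.Ioc_union_Ioi_eq_Ioi hT0.le]
  -- the near-field bound
  have hnear : |(∫ r in Set.Ioc (0:ℝ) T, FF lam W φ r) - ∫ r in Set.Ioc (0:ℝ) T, FF lam W₀ φ₀ r|
      ≤ δ * M * T := by
    rw [← integral_sub (hIW.mono_set Set.Ioc_subset_Ioi_self)
      (hI₀.mono_set Set.Ioc_subset_Ioi_self)]
    have hb : ∀ r ∈ Set.Ioc (0:ℝ) T, ‖FF lam W φ r - FF lam W₀ φ₀ r‖ ≤ δ * M := by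
      intro r hr
      rw [Real.norm_eq_abs]
      refine (FF_diff_le lam W W₀ φ φ₀ r).trans ?_
      have hpd : |φ r - φ₀ r| ≤ (lam⁻¹ * δ) * C :=
        phase_diff_le hlam W W₀ hφ hφ₀ hT0.le ⟨hr.1.le, hr.2⟩
      have hmono : ‖W₀‖ * (2 * (s * |φ r - φ₀ r|)) ≤ ‖W₀‖ * (2 * (s * ((lam⁻¹ * δ) * C))) := by
        gcongr
      calc δ + ‖W₀‖ * (2 * (s * |φ r - φ₀ r|))
          ≤ δ + ‖W₀‖ * (2 * (s * ((lam⁻¹ * δ) * C))) := by linarith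
        _ = δ * M := by rw [hMdef]; ring
    calc ‖∫ r in Set.Ioc (0:ℝ) T, (FF lam W φ r - FF lam W₀ φ₀ r)‖
        ≤ (δ * M) * (volume (Set.Ioc (0:ℝ) T)).toReal :=
          norm_setIntegral_le_of_norm_le_const (by simp [Real.volume_Ioc]) hb
      _ = δ * M * T := by
          simp [Real.volume_Ioc, ENNReal.toReal_ofReal hT0.le]
  -- tail bounds
  have htailW : |∫ r in Set.Ioi T, FF lam W φ r| ≤ (‖W₀‖ + 1) / T :=
    (FF_tail lam W hφc hT0).trans (by gcongr)
  have htail₀ : |∫ r in Set.Ioi T, FF lam W₀ φ₀ r| ≤ (‖W₀‖ + 1) / T :=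
    (FF_tail lam W₀ hφ₀c hT0).trans (by gcongr; linarith)
  -- total bound
  have key : dist (Phase W) (Phase W₀)
      = s⁻¹ * |(∫ r in Set.Ioi (0:ℝ), FF lam W φ r) - ∫ r in Set.Ioi (0:ℝ), FF lam W₀ φ₀ r| := by
    rw [Real.dist_eq, hval, hval₀, ← mul_sub, abs_mul, abs_of_pos (inv_pos.2 hs0)]
    rfl
  rw [key, hsplit W φ hIW, hsplit W₀ φ₀ hI₀]
  have h3 : |(∫ r in Set.Ioi T, FF lam W φ r) - ∫ r in Set.Ioi T, FF lam W₀ φ₀ r|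
      ≤ 2 * ((‖W₀‖ + 1) / T) := by
    refine (abs_sub _ _).trans ?_
    linarith
  have habs : |(∫ r in Set.Ioc (0:ℝ) T, FF lam W φ r) + (∫ r in Set.Ioi T, FF lam W φ r)
      - ((∫ r in Set.Ioc (0:ℝ) T, FF lam W₀ φ₀ r) + ∫ r in Set.Ioi T, FF lam W₀ φ₀ r)|
      ≤ δ * M * T + 2 * ((‖W₀‖ + 1) / T) := by
    calc |(∫ r in Set.Ioc (0:ℝ) T, FF lam W φ r) + (∫ r in Set.Ioi T, FF lam W φ r)
        - ((∫ r in Set.Ioc (0:ℝ) T, FF lam W₀ φ₀ r) + ∫ r in Set.Ioi T, FF lam W₀ φ₀ r)|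
        = |((∫ r in Set.Ioc (0:ℝ) T, FF lam W φ r) - ∫ r in Set.Ioc (0:ℝ) T, FF lam W₀ φ₀ r)
          + ((∫ r in Set.Ioi T, FF lam W φ r) - ∫ r in Set.Ioi T, FF lam W₀ φ₀ r)| := by
          ring_nf
      _ ≤ |(∫ r in Set.Ioc (0:ℝ) T, FF lam W φ r) - ∫ r in Set.Ioc (0:ℝ) T, FF lam W₀ φ₀ r|
          + |(∫ r in Set.Ioi T, FF lam W φ r) - ∫ r in Set.Ioi T, FF lam W₀ φ₀ r| := abs_add_le _ _
      _ ≤ δ * M * T + 2 * ((‖W₀‖ + 1) / T) := add_le_add hnear h3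
  calc s⁻¹ * |(∫ r in Set.Ioc (0:ℝ) T, FF lam W φ r) + (∫ r in Set.Ioi T, FF lam W φ r)
      - ((∫ r in Set.Ioc (0:ℝ) T, FF lam W₀ φ₀ r) + ∫ r in Set.Ioi T, FF lam W₀ φ₀ r)|
      ≤ s⁻¹ * (δ * M * T + 2 * ((‖W₀‖ + 1) / T)) :=
        mul_le_mul_of_nonneg_left habs (inv_pos.2 hs0).le
    _ = δ * D + s⁻¹ * (2 * ((‖W₀‖ + 1) / T)) := by rw [hDdef]; ring
    _ < ε := by
      have hD1 : δ * D < ε / 2 := by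
        have hlt : δ * (D + 1) < (ε / 2 / (D + 1)) * (D + 1) := by
          apply mul_lt_mul_of_pos_right hδ2 (by linarith)
        rw [div_mul_cancel₀ _ (by linarith : D + 1 ≠ 0)] at hlt
        nlinarith [hD0, hδ0]
      have hD2 : s⁻¹ * (2 * ((‖W₀‖ + 1) / T)) ≤ ε / 2 := by
        have hTge : 4 * s⁻¹ * (‖W₀‖ + 1) / ε ≤ T := le_max_right _ _
        rw [div_le_iff₀ hε] at hTge
        have heq : s⁻¹ * (2 * ((‖W₀‖ + 1) / T)) = (2 * s⁻¹ * (‖W₀‖ + 1)) / T := by ring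
        rw [heq, div_le_iff₀ hT0]
        linarith
      linarith
end
end
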